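/- Retrodicting an X-basis measurement with the Z-ensemble belief: let S be a qubit, |±⟩ = (|0⟩±|1⟩)/√2, E_{+/−} the CPTP map from S to a two-dimensional classical system T given by E_{+/−}(ρ) = ⟨+|ρ|+⟩ |+̃⟩⟨+̃| + ⟨−|ρ|−⟩ |−̃⟩⟨−̃| (where {|+̃⟩,|−̃⟩} is the standard basis of T), and let β₁ = (1/2)|0⟩⟨0|⊗|0̃⟩⟨0̃| + (1/2)|1⟩⟨1|⊗|1̃⟩⟨1̃| be the belief on S⊗R₁ corresponding to the ensemble {|0⟩,|1⟩} with equal weights. Then R_ext^{E_{+/−},β₁}(|+̃⟩⟨+̃|) = 1_S/2 and R_ext^{E_{+/−},β₁}(|−̃⟩⟨−̃|) = 1_S/2. -/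

import Mathlib

open Matrix
open scoped Kronecker ComplexOrder


open Classical in
/-- The positive semidefinite square root of a matrix (zero if not PSD). -/
noncomputable def msqrt {n : Type*} [Fintype n] [DecidableEq n] (A : Matrix n n ℂ) :
    Matrix n n ℂ :=
  if h : A.PosSemidef then (h.1.eigenvectorUnitary : Matrix n n ℂ) *
      diagonal ((↑) ∘ Real.sqrt ∘ h.1.eigenvalues) * (star h.1.eigenvectorUnitary : Matrix n n ℂ)
    else 0

/-- `A^{-1/2}`: the (nonsingular) inverse of the PSD square root. -/
noncomputable def invsqrt {n : Type*} [Fintype n] [DecidableEq n] (A : Matrix n n ℂ) :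
    Matrix n n ℂ :=
  (msqrt A)⁻¹

/-- Partial trace over the second factor `R`. -/
noncomputable def ptraceR {S R : Type*} [Fintype R] (M : Matrix (S × R) (S × R) ℂ) : Matrix S S ℂ :=
  Matrix.of fun s s' => ∑ r, M (s, r) (s', r)

/-- A density matrix: positive semidefinite with unit trace. -/
def IsDensity {n : Type*} [Fintype n] (A : Matrix n n ℂ) : Prop :=
  A.PosSemidef ∧ A.trace = 1

/-- The Choi matrix of a linear map between matrix algebras. -/
def choi {S T : Type*} [Fintype S] [DecidableEq S]
    (E : Matrix S S ℂ →ₗ[ℂ] Matrix T T ℂ) : Matrix (S × T) (S × T) ℂ :=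
  Matrix.of fun p q => E (Matrix.single p.1 q.1 1) p.2 q.2

/-- Completely positive trace-preserving map. -/
def IsCPTP {S T : Type*} [Fintype S] [DecidableEq S] [Fintype T]
    (E : Matrix S S ℂ →ₗ[ℂ] Matrix T T ℂ) : Prop :=
  (∀ X, (E X).trace = X.trace) ∧ (choi E).PosSemidef

/-- The Hilbert-Schmidt adjoint `E†`, satisfying `Tr[E(X)† Y] = Tr[X† E†(Y)]`. -/
noncomputable def adjMap {S T : Type*} [Fintype S] [DecidableEq S] [Fintype T]
    (E : Matrix S S ℂ →ₗ[ℂ] Matrix T T ℂ) (Y : Matrix T T ℂ) : Matrix S S ℂ :=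
  Matrix.of fun i j => ((E (Matrix.single i j 1))ᴴ * Y).trace

/-- The original Petz map `R^{E,βS}(σ) = √βS E†(E(βS)^{-1/2} σ E(βS)^{-1/2}) √βS`. -/
noncomputable def petz {S T : Type*} [Fintype S] [DecidableEq S] [Fintype T] [DecidableEq T]
    (E : Matrix S S ℂ →ₗ[ℂ] Matrix T T ℂ) (βS : Matrix S S ℂ) (σ : Matrix T T ℂ) :
    Matrix S S ℂ :=
  msqrt βS * adjMap E (invsqrt (E βS) * σ * invsqrt (E βS)) * msqrt βS

/-- The prior-extended Petz map `R^{E⊗Tr,β}`. -/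
noncomputable def petzExt {S R T : Type*} [Fintype S] [DecidableEq S]
    [Fintype R] [DecidableEq R] [Fintype T] [DecidableEq T]
    (E : Matrix S S ℂ →ₗ[ℂ] Matrix T T ℂ) (β : Matrix (S × R) (S × R) ℂ)
    (σ : Matrix T T ℂ) : Matrix (S × R) (S × R) ℂ :=
  msqrt β *
    (adjMap E (invsqrt (E (ptraceR β)) * σ * invsqrt (E (ptraceR β))) ⊗ₖ (1 : Matrix R R ℂ)) *
    msqrt β

/-- The retrodiction map `R_ext^{E,β} = Tr_R ∘ R^{E⊗Tr,β}`. -/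
noncomputable def retroExt {S R T : Type*} [Fintype S] [DecidableEq S]
    [Fintype R] [DecidableEq R] [Fintype T] [DecidableEq T]
    (E : Matrix S S ℂ →ₗ[ℂ] Matrix T T ℂ) (β : Matrix (S × R) (S × R) ℂ)
    (σ : Matrix T T ℂ) : Matrix S S ℂ :=
  ptraceR (petzExt E β σ)

/-- Two beliefs are equivalent if they induce the same retrodiction map for all channels. -/
def EquivBeliefs {S R₁ R₂ : Type*} [Fintype S] [DecidableEq S]
    [Fintype R₁] [DecidableEq R₁] [Fintype R₂] [DecidableEq R₂]
    (β : Matrix (S × R₁) (S × R₁) ℂ) (γ : Matrix (S × R₂) (S × R₂) ℂ) : Prop :=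
  ∀ (T : Type) (_ : Fintype T) (_ : DecidableEq T)
    (E : Matrix S S ℂ →ₗ[ℂ] Matrix T T ℂ),
    IsCPTP E → (E (ptraceR β)).PosDef → (E (ptraceR γ)).PosDef →
    ∀ σ : Matrix T T ℂ, retroExt E β σ = retroExt E γ σ

/-- Measurement in the basis `{v₀, v₁}`, recorded in the standard basis of a classical bit. -/
noncomputable def meas2 (v₀ v₁ : Fin 2 → ℂ) :
    Matrix (Fin 2) (Fin 2) ℂ →ₗ[ℂ] Matrix (Fin 2) (Fin 2) ℂ where
  toFun ρ := (∑ i, ∑ j, star (v₀ i) * ρ i j * v₀ j) • Matrix.single 0 0 1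
      + (∑ i, ∑ j, star (v₁ i) * ρ i j * v₁ j) • Matrix.single 1 1 1
  map_add' x y := by
    simp only [Matrix.add_apply, mul_add, add_mul, Finset.sum_add_distrib, add_smul]
    abel
  map_smul' c x := by
    have h : ∀ v : Fin 2 → ℂ,
        (∑ i, ∑ j, star (v i) * ((c • x) i j) * v j)
          = c * ∑ i, ∑ j, star (v i) * x i j * v j := by
      intro v
      rw [Finset.mul_sum]
      refine Finset.sum_congr rfl fun i _ => ?_
      rw [Finset.mul_sum]
      refine Finset.sum_congr rfl fun j _ => ?_
      simp only [Matrix.smul_apply, smul_eq_mul]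
      ring
    simp only [RingHom.id_apply, smul_add, smul_smul]
    rw [h, h]

/-- The qubit state `|0⟩`. -/
noncomputable def q0 : Fin 2 → ℂ := ![1, 0]
/-- The qubit state `|1⟩`. -/
noncomputable def q1 : Fin 2 → ℂ := ![0, 1]
/-- The qubit state `|+⟩ = (|0⟩+|1⟩)/√2`. -/
noncomputable def qP : Fin 2 → ℂ := ![(Real.sqrt 2 : ℂ)⁻¹, (Real.sqrt 2 : ℂ)⁻¹]
/-- The qubit state `|−⟩ = (|0⟩−|1⟩)/√2`. -/
noncomputable def qM : Fin 2 → ℂ := ![(Real.sqrt 2 : ℂ)⁻¹, -(Real.sqrt 2 : ℂ)⁻¹]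
/-- The qubit state `|+i⟩ = (|0⟩+i|1⟩)/√2`. -/
noncomputable def qPi : Fin 2 → ℂ := ![(Real.sqrt 2 : ℂ)⁻¹, Complex.I * (Real.sqrt 2 : ℂ)⁻¹]
/-- The qubit state `|−i⟩ = (|0⟩−i|1⟩)/√2`. -/
noncomputable def qMi : Fin 2 → ℂ := ![(Real.sqrt 2 : ℂ)⁻¹, -(Complex.I * (Real.sqrt 2 : ℂ)⁻¹)]
/-- The rank-one projector `|v⟩⟨v|`. -/
noncomputable def proj (v : Fin 2 → ℂ) : Matrix (Fin 2) (Fin 2) ℂ :=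
  Matrix.vecMulVec v (star v)

/-!
A belief `∑ₛ pₛ |s⟩⟨s| ⊗ |s⟩⟨s|` built from basis states is diagonal, and so is its square root.
Conjugating `A ⊗ 1` by that square root and tracing out the reference therefore keeps only the
diagonal of `A`, weighted by `p`. Here `β_S = 1/2`, and `E(β_S) = 1/2` because the measurement vectors
are unit vectors, so `R_ext(|k̃⟩⟨k̃|) = diag(1/2 · 2 |v_k(s)|²)`. The X basis is unbiased with respect
to the Z basis, `|v_k(s)|² = 1/2`, which makes this `1/2`.
-/

section Msqrt

variable {n : Type*} [Fintype n] [DecidableEq n]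

open scoped MatrixOrder in
theorem msqrt_eq_of_mul_self {A B : Matrix n n ℂ}
    (hA : A.PosSemidef) (hB : B.PosSemidef) (h : B * B = A) :
    msqrt A = B := by
  rw [msqrt, dif_pos hA, ← CFC.sqrt_unique h hB.nonneg, CFC.sqrt_eq_real_sqrt A hA.nonneg,
    cfcₙ_eq_cfc, hA.1.cfc_eq, IsHermitian.cfc, Unitary.conjStarAlgAut_apply]
  rfl

theorem msqrt_diagonal {d : n → ℝ} (hd : 0 ≤ d) :
    msqrt (diagonal fun i => (d i : ℂ)) = diagonal fun i => (Real.sqrt (d i) : ℂ) := by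
  refine msqrt_eq_of_mul_self
    (posSemidef_diagonal_iff.mpr fun i => Complex.zero_le_real.mpr (hd i))
    (posSemidef_diagonal_iff.mpr fun i => Complex.zero_le_real.mpr (Real.sqrt_nonneg _)) ?_
  rw [diagonal_mul_diagonal]
  congr 1
  ext i
  rw [← Complex.ofReal_mul, Real.mul_self_sqrt (hd i)]

theorem invsqrt_smul_one {c : ℝ} (hc : 0 < c) :
    invsqrt ((c : ℂ) • (1 : Matrix n n ℂ)) = ((Real.sqrt c : ℂ))⁻¹ • 1 := by
  have hsqrt : (Real.sqrt c : ℂ) ≠ 0 := by exact_mod_cast (Real.sqrt_pos.mpr hc).ne'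
  rw [invsqrt, smul_one_eq_diagonal, msqrt_diagonal (fun _ => hc.le), ← smul_one_eq_diagonal]
  exact inv_eq_left_inv (by rw [smul_mul_smul_comm, one_mul, inv_mul_cancel₀ hsqrt, one_smul])

theorem invsqrt_smul_one_mul_mul {c : ℝ} (hc : 0 < c) (σ : Matrix n n ℂ) :
    invsqrt ((c : ℂ) • (1 : Matrix n n ℂ)) * σ * invsqrt ((c : ℂ) • 1) = ((c : ℂ))⁻¹ • σ := by
  rw [invsqrt_smul_one hc, smul_mul_assoc, one_mul, mul_smul_comm, mul_one, smul_smul,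
    ← mul_inv, ← Complex.ofReal_mul, Real.mul_self_sqrt hc.le]

end Msqrt

section BasisEnsemble

variable {S : Type*} [Fintype S] [DecidableEq S]

noncomputable def basisEnsembleBelief (p : S → ℝ) : Matrix (S × S) (S × S) ℂ :=
  ∑ s, (p s : ℂ) • (single s s 1 ⊗ₖ single s s 1)

theorem basisEnsembleBelief_eq_diagonal (p : S → ℝ) :
    basisEnsembleBelief p = diagonal fun x => ((if x.1 = x.2 then p x.1 else 0 : ℝ) : ℂ) := by
  ext ⟨s, r⟩ ⟨s', r'⟩
  simp only [basisEnsembleBelief, Complex.coe_smul, Matrix.sum_apply, Matrix.smul_apply,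
    kroneckerMap_apply, single_apply, mul_ite, mul_one, mul_zero, smul_ite, Complex.real_smul,
    smul_zero, diagonal_apply, Prod.ext_iff]
  rw [Finset.sum_eq_single r (fun x _ hx => if_neg fun h => hx h.1) (by simp)]
  aesop

theorem ptraceR_basisEnsembleBelief (p : S → ℝ) :
    ptraceR (basisEnsembleBelief p) = diagonal fun s => (p s : ℂ) := by
  ext s s'
  by_cases h : s = s' <;>
    simp [ptraceR, basisEnsembleBelief_eq_diagonal, diagonal_apply, apply_ite, h]

theorem msqrt_basisEnsembleBelief {p : S → ℝ} (hp : 0 ≤ p) :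
    msqrt (basisEnsembleBelief p) = basisEnsembleBelief fun s => Real.sqrt (p s) := by
  rw [basisEnsembleBelief_eq_diagonal, msqrt_diagonal, basisEnsembleBelief_eq_diagonal]
  · simp only [apply_ite Real.sqrt, Real.sqrt_zero]
  · exact fun x => ite_nonneg (hp x.1) le_rfl

theorem ptraceR_basisEnsembleBelief_mul_kron_one_mul (q : S → ℝ) (A : Matrix S S ℂ) :
    ptraceR (basisEnsembleBelief q * (A ⊗ₖ (1 : Matrix S S ℂ)) * basisEnsembleBelief q)
      = diagonal fun s => (q s : ℂ) ^ 2 * A s s := by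
  ext s s'
  simp only [basisEnsembleBelief_eq_diagonal, ptraceR, of_apply, diagonal_mul, mul_diagonal,
    kronecker_apply, one_apply, diagonal_apply, apply_ite Complex.ofReal, Complex.ofReal_zero,
    if_true, mul_one, ite_mul, zero_mul, mul_ite, mul_zero, Finset.sum_ite_eq, Finset.mem_univ]
  split_ifs with h
  · subst h; ring
  · rfl

theorem retroExt_basisEnsembleBelief {T : Type*} [Fintype T] [DecidableEq T]
    (E : Matrix S S ℂ →ₗ[ℂ] Matrix T T ℂ) {p : S → ℝ} (hp : 0 ≤ p) (σ : Matrix T T ℂ) :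
    retroExt E (basisEnsembleBelief p) σ = diagonal fun s => (p s : ℂ) *
      adjMap E (invsqrt (E (diagonal fun s => (p s : ℂ))) * σ
        * invsqrt (E (diagonal fun s => (p s : ℂ)))) s s := by
  rw [retroExt, petzExt, msqrt_basisEnsembleBelief hp, ptraceR_basisEnsembleBelief,
    ptraceR_basisEnsembleBelief_mul_kron_one_mul]
  simp only [← Complex.ofReal_pow, Real.sq_sqrt (hp _)]

end BasisEnsemble

theorem meas2_smul_one {v₀ v₁ : Fin 2 → ℂ} (hv₀ : ∑ i, star (v₀ i) * v₀ i = 1)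
    (hv₁ : ∑ i, star (v₁ i) * v₁ i = 1) (c : ℂ) :
    meas2 v₀ v₁ (c • 1) = c • 1 := by
  simp only [Fin.sum_univ_two, Complex.star_def] at hv₀ hv₁
  ext i j
  fin_cases i <;> fin_cases j <;> simp [meas2, one_apply, Fin.sum_univ_two, hv₀, hv₁]

theorem adjMap_meas2_single (v₀ v₁ : Fin 2 → ℂ) (k : Fin 2) (c : ℂ) :
    adjMap (meas2 v₀ v₁) (single k k c) = c • proj (![v₀, v₁] k) := by
  ext i j
  fin_cases k <;> fin_cases i <;> fin_cases j <;>
    simp [adjMap, meas2, proj, trace, mul_apply, Fin.sum_univ_two, vecMulVec_apply] <;> ring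

theorem retroExt_meas2_basisEnsembleBelief_half {v₀ v₁ : Fin 2 → ℂ}
    (hv₀ : ∀ s, star (v₀ s) * v₀ s = 1 / 2) (hv₁ : ∀ s, star (v₁ s) * v₁ s = 1 / 2) (k : Fin 2) :
    retroExt (meas2 v₀ v₁) (basisEnsembleBelief fun _ => 1 / 2) (single k k 1)
      = (1 / 2 : ℂ) • 1 := by
  have hunit (v : Fin 2 → ℂ) (hv : ∀ s, star (v s) * v s = 1 / 2) :
      ∑ i, star (v i) * v i = 1 := by
    rw [Fin.sum_univ_two, hv, hv]; norm_num
  rw [retroExt_basisEnsembleBelief _ (fun _ => by norm_num), ← smul_one_eq_diagonal,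
    meas2_smul_one (hunit v₀ hv₀) (hunit v₁ hv₁), invsqrt_smul_one_mul_mul (by norm_num),
    smul_single, adjMap_meas2_single]
  simp only [Complex.star_def] at hv₀ hv₁
  ext s t
  fin_cases k <;>
    simp [diagonal_apply, one_apply, proj, vecMulVec_apply, mul_comm (v₀ _), mul_comm (v₁ _),
      hv₀, hv₁]

theorem star_mul_self_inv_sqrt_two :
    star ((Real.sqrt 2 : ℂ))⁻¹ * ((Real.sqrt 2 : ℂ))⁻¹ = 1 / 2 := by
  rw [star_inv₀, Complex.star_def, Complex.conj_ofReal, ← mul_inv, ← Complex.ofReal_mul,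
    Real.mul_self_sqrt zero_le_two]
  norm_num

theorem star_qP_mul_qP (s : Fin 2) : star (qP s) * qP s = 1 / 2 := by
  fin_cases s <;> exact star_mul_self_inv_sqrt_two

theorem star_qM_mul_qM (s : Fin 2) : star (qM s) * qM s = 1 / 2 := by
  fin_cases s
  · exact star_mul_self_inv_sqrt_two
  · change star (-(Real.sqrt 2 : ℂ)⁻¹) * -(Real.sqrt 2 : ℂ)⁻¹ = 1 / 2
    rw [star_neg, neg_mul_neg]
    exact star_mul_self_inv_sqrt_two

/-- Retrodicting an X-basis measurement with the Z-ensemble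
belief `β₁` returns the maximally mixed state for both outcomes. -/
theorem retro_measX_Z_ensemble :
    retroExt (meas2 qP qM)
        ((1 / 2 : ℂ) • (Matrix.single (0 : Fin 2) 0 (1 : ℂ)
            ⊗ₖ Matrix.single (0 : Fin 2) 0 (1 : ℂ))
          + (1 / 2 : ℂ) • (Matrix.single (1 : Fin 2) 1 (1 : ℂ)
            ⊗ₖ Matrix.single (1 : Fin 2) 1 (1 : ℂ)))
        (Matrix.single (0 : Fin 2) 0 (1 : ℂ))
      = (1 / 2 : ℂ) • (1 : Matrix (Fin 2) (Fin 2) ℂ) ∧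
    retroExt (meas2 qP qM)
        ((1 / 2 : ℂ) • (Matrix.single (0 : Fin 2) 0 (1 : ℂ)
            ⊗ₖ Matrix.single (0 : Fin 2) 0 (1 : ℂ))
          + (1 / 2 : ℂ) • (Matrix.single (1 : Fin 2) 1 (1 : ℂ)
            ⊗ₖ Matrix.single (1 : Fin 2) 1 (1 : ℂ)))
        (Matrix.single (1 : Fin 2) 1 (1 : ℂ))
      = (1 / 2 : ℂ) • (1 : Matrix (Fin 2) (Fin 2) ℂ) := by
  have hβ : (1 / 2 : ℂ) • (single (0 : Fin 2) 0 (1 : ℂ) ⊗ₖ single (0 : Fin 2) 0 (1 : ℂ))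
      + (1 / 2 : ℂ) • (single (1 : Fin 2) 1 (1 : ℂ) ⊗ₖ single (1 : Fin 2) 1 (1 : ℂ))
      = basisEnsembleBelief fun _ => 1 / 2 := by
    simp [basisEnsembleBelief, Fin.sum_univ_two]
  rw [hβ]
  exact ⟨retroExt_meas2_basisEnsembleBelief_half star_qP_mul_qP star_qM_mul_qM 0,
    retroExt_meas2_basisEnsembleBelief_half star_qP_mul_qP star_qM_mul_qM 1⟩
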